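/- For n ≥ 3 and p,q,p′,q′ ≥ 1 with p+q = p′+q′ = n−1, the identity x^p h k t x^q ≈ h x^{p′} k x^{q′} t is equationally equivalent to the three identities x^p h x^q ≈ h x^{n−1}, x^p k x^q ≈ x^{p′} k x^{q′}, and x^p t x^q ≈ x^{n−1} t. -/

import Mathlib

/-! Substituting an arbitrary word `w` for `h` in `x^p h x^q ≈ h x^{n-1}` gives
`x^p w x^q ≈ w x^{n-1}` for every `w`. With `w = hkt`, `w = t` and `w = k` this moves the
block of `x`'s across `hkt`, lets the `t`-identity carry it past `t`, and lets the `k`-identity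
split it around `k`. Conversely, erasing two of the letters `h, k, t` from
`x^p hkt x^q ≈ h x^{p'} k x^{q'} t` yields each of the three identities. -/

abbrev Word := List ℕ

def subst (φ : ℕ → Word) (w : Word) : Word := w.flatMap φ

inductive Deduce (S : Set (Word × Word)) : Word → Word → Prop
  | refl (w : Word) : Deduce S w w
  | symm {u v : Word} : Deduce S u v → Deduce S v u
  | trans {u v w : Word} : Deduce S u v → Deduce S v w → Deduce S u w
  | step (a b : Word) (φ : ℕ → Word) {s t : Word} (h : (s, t) ∈ S) :
      Deduce S (a ++ subst φ s ++ b) (a ++ subst φ t ++ b)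

def FM (w : Word) : Type := Option {u : Word // u <:+: w}

def fmul {w : Word} : FM w → FM w → FM w
  | some u, some v =>
      if h : (u.1 ++ v.1) <:+: w then some ⟨u.1 ++ v.1, h⟩ else none
  | _, _ => none

def fone (w : Word) : FM w := some ⟨[], List.nil_infix⟩

theorem fmul_none_left {w : Word} (a : FM w) : fmul none a = none := rfl

theorem fmul_none_right {w : Word} (a : FM w) : fmul a none = none := by
  rcases a with _ | u <;> rfl

theorem fmul_some {w : Word} (u v : {u : Word // u <:+: w}) :
    fmul (some u) (some v) =
      if h : (u.1 ++ v.1) <:+: w then some ⟨u.1 ++ v.1, h⟩ else none := rfl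

theorem fmul_assoc {w : Word} (a b c : FM w) : fmul (fmul a b) c = fmul a (fmul b c) := by
  rcases a with _ | u
  · rfl
  rcases b with _ | v
  · rfl
  rcases c with _ | t
  · rw [fmul_none_right] <;> rfl
  rw [fmul_some, fmul_some]
  by_cases h : (u.1 ++ v.1 ++ t.1) <:+: w
  · have h1 : (u.1 ++ v.1) <:+: w := List.IsInfix.trans ⟨[], t.1, by simp⟩ h
    have h2 : (v.1 ++ t.1) <:+: w := List.IsInfix.trans ⟨u.1, [], by simp⟩ h
    rw [dif_pos h1, fmul_some, dif_pos h2, fmul_some, dif_pos h,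
      dif_pos (show (u.1 ++ (v.1 ++ t.1)) <:+: w by simpa [List.append_assoc] using h)]
    simp [List.append_assoc] <;> rfl
  · by_cases h1 : (u.1 ++ v.1) <:+: w
    · rw [dif_pos h1, fmul_some, dif_neg h]
      by_cases h2 : (v.1 ++ t.1) <:+: w
      · rw [dif_pos h2, fmul_some,
          dif_neg (fun hh => h (by simpa [List.append_assoc] using hh))]
      · rw [dif_neg h2] <;> rfl
    · rw [dif_neg h1]
      by_cases h2 : (v.1 ++ t.1) <:+: w
      · rw [dif_pos h2, fmul_some,
          dif_neg (fun hh => h1 (List.IsInfix.trans ⟨[], t.1, by simp⟩ hh))] <;> rfl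
      · rw [dif_neg h2] <;> rfl

instance (w : Word) : Monoid (FM w) where
  mul := fmul
  one := fone w
  mul_assoc := fmul_assoc
  one_mul := by
    rintro (_ | u)
    · rfl
    · show fmul (fone w) (some u) = some u
      rw [fone, fmul_some, dif_pos (by simpa using u.2)]
      simp <;> rfl
  mul_one := by
    rintro (_ | u)
    · rfl
    · show fmul (some u) (fone w) = some u
      rw [fone, fmul_some, dif_pos (by simpa using u.2)]
      simp <;> rfl

def SatId (M : Type) [Monoid M] (p : Word × Word) : Prop :=
  ∀ φ : ℕ → M, (p.1.map φ).prod = (p.2.map φ).prod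

def VSat (E : Set (Word × Word)) (p : Word × Word) : Prop :=
  ∀ (M : Type) [Monoid M], (∀ q ∈ E, SatId M q) → SatId M p

def ids0 : Set (Word × Word) :=
  {([0,1,2,0,3,1],[1,0,2,0,3,1]), ([0,2,0,1,3,1],[0,2,1,0,3,1]), ([0,2,1,3,0,1],[0,2,1,3,1,0])}

def idA (n : ℕ) : Word × Word :=
  (List.replicate n 0 ++ (List.range n).map (· + 1),
   ((List.range n).map (fun i => [i + 1, 0])).flatten)

def rigid (e₀ : ℕ) (es : List ℕ) : Word :=
  List.replicate e₀ 0 ++ (((List.range es.length).zip es).map (fun p => (p.1 + 1) :: List.replicate p.2 0)).flatten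

def Bword (n i : ℕ) : Word := List.replicate i 0 ++ 1 :: List.replicate (n - 1 - i) 0

def wmr (m r : ℕ) : Word := rigid (m - 1) (List.replicate r (m - 1))

def X (p : ℕ) : Word := List.replicate p 0

namespace Deduce

variable {S : Set (Word × Word)}

instance : Trans (Deduce S) (Deduce S) (Deduce S) := ⟨Deduce.trans⟩

theorem of_mem {s t : Word} (h : (s, t) ∈ S) : Deduce S s t := by
  simpa [subst] using step [] [] (fun i => [i]) h

theorem append_congr {u v : Word} (h : Deduce S u v) (a b : Word) :
    Deduce S (a ++ u ++ b) (a ++ v ++ b) := by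
  induction h with
  | refl w => exact refl _
  | symm _ ih => exact ih.symm
  | trans _ _ ih₁ ih₂ => exact ih₁.trans ih₂
  | step c d φ hst =>
    simpa only [List.append_assoc] using step (a ++ c) (d ++ b) φ hst

theorem subst_congr (φ : ℕ → Word) {u v : Word} (h : Deduce S u v) :
    Deduce S (subst φ u) (subst φ v) := by
  induction h with
  | refl w => exact refl _
  | symm _ ih => exact ih.symm
  | trans _ _ ih₁ ih₂ => exact ih₁.trans ih₂
  | step a b ψ hst =>
    simpa only [subst, List.flatMap_append, List.flatMap_assoc] using
      step (subst φ a) (subst φ b) (fun i => subst φ (ψ i)) hst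

end Deduce

@[simp] theorem subst_nil (φ : ℕ → Word) : subst φ [] = [] := rfl

@[simp] theorem subst_cons (φ : ℕ → Word) (i : ℕ) (w : Word) :
    subst φ (i :: w) = φ i ++ subst φ w := rfl

@[simp] theorem subst_append (φ : ℕ → Word) (u v : Word) :
    subst φ (u ++ v) = subst φ u ++ subst φ v := List.flatMap_append

theorem subst_X {φ : ℕ → Word} (h : φ 0 = [0]) (m : ℕ) : subst φ (X m) = X m := by
  simp [subst, X, List.flatMap_replicate, h]

theorem X_add (a b : ℕ) : X (a + b) = X a ++ X b := List.replicate_add a b 0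

section

variable {S : Set (Word × Word)} {m p q p' q' : ℕ}

theorem deduce_hkt_of_deduce_h_k_t (hh : Deduce S (X p ++ [1] ++ X q) ([1] ++ X m))
    (hk : Deduce S (X p ++ [2] ++ X q) (X p' ++ [2] ++ X q'))
    (ht : Deduce S (X p ++ [3] ++ X q) (X m ++ [3])) :
    Deduce S (X p ++ [1, 2, 3] ++ X q) ([1] ++ X p' ++ [2] ++ X q' ++ [3]) := by
  have hw (w : Word) : Deduce S (X p ++ w ++ X q) (w ++ X m) := by
    simpa [subst_X] using hh.subst_congr (fun i => if i = 1 then w else [i])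
  calc Deduce S (X p ++ [1, 2, 3] ++ X q) ([1, 2] ++ ([3] ++ X m) ++ []) := by
        simpa using hw [1, 2, 3]
    Deduce S _ ([1, 2] ++ (X p ++ [3] ++ X q) ++ []) := (hw [3]).symm.append_congr _ _
    Deduce S _ ([1] ++ ([2] ++ X m) ++ [3]) := by simpa using ht.append_congr [1, 2] []
    Deduce S _ ([1] ++ (X p ++ [2] ++ X q) ++ [3]) := (hw [2]).symm.append_congr _ _
    Deduce S _ ([1] ++ X p' ++ [2] ++ X q' ++ [3]) := by simpa using hk.append_congr [1] [3]

theorem deduce_h_of_deduce_hkt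
    (hE : Deduce S (X p ++ [1, 2, 3] ++ X q) ([1] ++ X p' ++ [2] ++ X q' ++ [3])) :
    Deduce S (X p ++ [1] ++ X q) ([1] ++ X (p' + q')) := by
  simpa [subst_X, X_add] using hE.subst_congr (fun i => if i = 2 ∨ i = 3 then [] else [i])

theorem deduce_k_of_deduce_hkt
    (hE : Deduce S (X p ++ [1, 2, 3] ++ X q) ([1] ++ X p' ++ [2] ++ X q' ++ [3])) :
    Deduce S (X p ++ [2] ++ X q) (X p' ++ [2] ++ X q') := by
  simpa [subst_X] using hE.subst_congr (fun i => if i = 1 ∨ i = 3 then [] else [i])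

theorem deduce_t_of_deduce_hkt
    (hE : Deduce S (X p ++ [1, 2, 3] ++ X q) ([1] ++ X p' ++ [2] ++ X q' ++ [3])) :
    Deduce S (X p ++ [3] ++ X q) (X (p' + q') ++ [3]) := by
  simpa [subst_X, X_add] using hE.subst_congr (fun i => if i = 1 ∨ i = 2 then [] else [i])

end

/-- Variables: `x = 0`, `h = 1`, `k = 2`, `t = 3`. -/
theorem stmt9_general (n p q p' q' : ℕ) (hpq' : p' + q' = n - 1) :
    Deduce {(X p ++ [1] ++ X q, [1] ++ X (n-1)),
            (X p ++ [2] ++ X q, X p' ++ [2] ++ X q'),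
            (X p ++ [3] ++ X q, X (n-1) ++ [3])}
      (X p ++ [1, 2, 3] ++ X q) ([1] ++ X p' ++ [2] ++ X q' ++ [3]) ∧
    Deduce {(X p ++ [1, 2, 3] ++ X q, [1] ++ X p' ++ [2] ++ X q' ++ [3])}
      (X p ++ [1] ++ X q) ([1] ++ X (n-1)) ∧
    Deduce {(X p ++ [1, 2, 3] ++ X q, [1] ++ X p' ++ [2] ++ X q' ++ [3])}
      (X p ++ [2] ++ X q) (X p' ++ [2] ++ X q') ∧
    Deduce {(X p ++ [1, 2, 3] ++ X q, [1] ++ X p' ++ [2] ++ X q' ++ [3])}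
      (X p ++ [3] ++ X q) (X (n-1) ++ [3]) := by
  refine ⟨deduce_hkt_of_deduce_h_k_t (m := n - 1)
    (.of_mem (by simp)) (.of_mem (by simp)) (.of_mem (by simp)), ?_⟩
  have hE := Deduce.of_mem (Set.mem_singleton
    (X p ++ [1, 2, 3] ++ X q, [1] ++ X p' ++ [2] ++ X q' ++ [3]))
  rw [← hpq']
  exact ⟨deduce_h_of_deduce_hkt hE, deduce_k_of_deduce_hkt hE, deduce_t_of_deduce_hkt hE⟩

/-- For `n ≥ 3` and `p,q,p',q' ≥ 1` with `p+q = p'+q' = n-1`, the identity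
`x^p h k t x^q ≈ h x^{p'} k x^{q'} t` is equationally equivalent to the identities
`x^p h x^q ≈ h x^{n-1}`, `x^p k x^q ≈ x^{p'} k x^{q'}`, and `x^p t x^q ≈ x^{n-1} t`.
(Variables: `x = 0`, `h = 1`, `k = 2`, `t = 3`.) -/
theorem stmt9 (n p q p' q' : ℕ) (hn : 3 ≤ n)
    (hp : 1 ≤ p) (hq : 1 ≤ q) (hp' : 1 ≤ p') (hq' : 1 ≤ q')
    (hpq : p + q = n - 1) (hpq' : p' + q' = n - 1) :
    Deduce {(X p ++ [1] ++ X q, [1] ++ X (n-1)),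
            (X p ++ [2] ++ X q, X p' ++ [2] ++ X q'),
            (X p ++ [3] ++ X q, X (n-1) ++ [3])}
      (X p ++ [1, 2, 3] ++ X q) ([1] ++ X p' ++ [2] ++ X q' ++ [3]) ∧
    Deduce {(X p ++ [1, 2, 3] ++ X q, [1] ++ X p' ++ [2] ++ X q' ++ [3])}
      (X p ++ [1] ++ X q) ([1] ++ X (n-1)) ∧
    Deduce {(X p ++ [1, 2, 3] ++ X q, [1] ++ X p' ++ [2] ++ X q' ++ [3])}
      (X p ++ [2] ++ X q) (X p' ++ [2] ++ X q') ∧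
    Deduce {(X p ++ [1, 2, 3] ++ X q, [1] ++ X p' ++ [2] ++ X q' ++ [3])}
      (X p ++ [3] ++ X q) (X (n-1) ++ [3]) :=
  stmt9_general n p q p' q' hpq'
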